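/- arXiv:1102.1833 — 2 statements merged into one kernel-verified Lean document; each statement's English description precedes it below -/
import Mathlib

section
/- Cauchy–Kovalevskaya extension of a polynomial: if g : ℝ^m → ℝ_{0,m} is a polynomial of degree d, then CK[g](x_0, \underline x) := Σ_{j=0}^{d} ((−x_0)^j / j!) ∂_{\underline x}^j g(\underline x) is monogenic in ℝ^{m+1}, i.e., ∂_x CK[g] = 0, and CK[g](0, \underline x) = g(\underline x). -/
/-! The `x_0`-derivative of `(-x_0)^(j+1)/(j+1)!` is `-(-x_0)^j/j!`, so in `∂_x CK[g]` the
`x_0`-derivative of the `(j+1)`-st term cancels the Dirac operator applied to the `j`-th term.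
What survives is `((-x_0)^d/d!) ∂^(d+1) g`, which vanishes because each Dirac operator lowers the
degree of a polynomial by one. -/

open Finset

variable {m : ℕ} {A : Type*} [NormedRing A] [NormedAlgebra ℝ A]

/-- The Dirac operator ∂_{\underline x} = Σ_j e_j ∂_{x_j} on A-valued functions on ℝ^m,
where `e : Fin m → A` are the Clifford generators acting by left multiplication. -/
noncomputable def Dirac (e : Fin m → A) (f : EuclideanSpace ℝ (Fin m) → A)
    (x : EuclideanSpace ℝ (Fin m)) : A :=
  ∑ j, e j * fderiv ℝ f x (EuclideanSpace.single j 1)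

/-- The generalized Cauchy–Riemann operator ∂_x = ∂_{x_0} + Σ_j e_j ∂_{x_j}
on A-valued functions on ℝ^{m+1} = ℝ × ℝ^m. -/
noncomputable def CR (e : Fin m → A) (f : ℝ × EuclideanSpace ℝ (Fin m) → A)
    (p : ℝ × EuclideanSpace ℝ (Fin m)) : A :=
  fderiv ℝ f p (1, 0) + ∑ j, e j * fderiv ℝ f p (0, EuclideanSpace.single j 1)

/-- The conjugate Cauchy–Riemann operator \overline∂_x = ∂_{x_0} − Σ_j e_j ∂_{x_j}. -/
noncomputable def CRbar (e : Fin m → A) (f : ℝ × EuclideanSpace ℝ (Fin m) → A)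
    (p : ℝ × EuclideanSpace ℝ (Fin m)) : A :=
  fderiv ℝ f p (1, 0) - ∑ j, e j * fderiv ℝ f p (0, EuclideanSpace.single j 1)

/-- The Laplacian Δ = Σ_{j=0}^m ∂_{x_j}² on ℝ^{m+1} = ℝ × ℝ^m. -/
noncomputable def Lap (f : ℝ × EuclideanSpace ℝ (Fin m) → A)
    (p : ℝ × EuclideanSpace ℝ (Fin m)) : A :=
  fderiv ℝ (fun q => fderiv ℝ f q (1, 0)) p (1, 0) +
    ∑ j, fderiv ℝ (fun q => fderiv ℝ f q (0, EuclideanSpace.single j 1)) p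
      (0, EuclideanSpace.single j 1)

/-- The Clifford vector \underline x = Σ_j x_j e_j associated to x ∈ ℝ^m. -/
noncomputable def vec (e : Fin m → A) (x : EuclideanSpace ℝ (Fin m)) : A :=
  ∑ j, x j • e j

/-- g : ℝ^m → A is a polynomial map of degree at most d. -/
def IsPolyDeg (d : ℕ) (g : EuclideanSpace ℝ (Fin m) → A) : Prop :=
  ∃ (S : Finset (Fin m →₀ ℕ)) (c : (Fin m →₀ ℕ) → A),
    (∀ α ∈ S, (α.sum fun _ n => n) ≤ d) ∧
    ∀ x, g x = ∑ α ∈ S, (∏ j, x j ^ α j) • c α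

/-- The Cauchy–Kovalevskaya extension CK[g](x_0,\underline x)
= Σ_{j=0}^{d} ((−x_0)^j/j!) ∂_{\underline x}^j g(\underline x) of a polynomial of degree d. -/
noncomputable def CKfin (e : Fin m → A) (d : ℕ) (g : EuclideanSpace ℝ (Fin m) → A)
    (p : ℝ × EuclideanSpace ℝ (Fin m)) : A :=
  ∑ j ∈ Finset.range (d + 1),
    (((-p.1) ^ j / j.factorial : ℝ)) • (Dirac e)^[j] g p.2

theorem differentiable_prod_pow (α : Fin m →₀ ℕ) :
    Differentiable ℝ (fun y : EuclideanSpace ℝ (Fin m) => ∏ j, y j ^ α j) := by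
  fun_prop

theorem fderiv_prod_pow_single (α : Fin m →₀ ℕ) (x : EuclideanSpace ℝ (Fin m)) (k : Fin m) :
    fderiv ℝ (fun y : EuclideanSpace ℝ (Fin m) => ∏ j, y j ^ α j) x (EuclideanSpace.single k 1) =
      α k * ∏ j, x j ^ (α - Finsupp.single k 1 : Fin m →₀ ℕ) j := by
  have hpow : ∀ i ∈ (Finset.univ : Finset (Fin m)),
      HasFDerivAt (fun y : EuclideanSpace ℝ (Fin m) => y i ^ α i)
        ((α i * x i ^ (α i - 1)) • EuclideanSpace.proj (𝕜 := ℝ) i) x := fun i _ =>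
    (hasDerivAt_pow (α i) (x i)).comp_hasFDerivAt x (EuclideanSpace.proj (𝕜 := ℝ) i).hasFDerivAt
  rw [(HasFDerivAt.finsetProd hpow).fderiv]
  simp only [_root_.sum_apply, _root_.smul_apply, PiLp.proj_apply, PiLp.single_apply, smul_eq_mul,
    mul_ite, mul_one, mul_zero, Finset.sum_ite_eq', Finset.mem_univ, ↓reduceIte]
  rw [← Finset.mul_prod_erase _ _ (Finset.mem_univ k)]
  have hrest : ∀ j ∈ Finset.univ.erase k,
      x j ^ (α - Finsupp.single k 1 : Fin m →₀ ℕ) j = x j ^ α j := fun j hj => by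
    simp [(Finset.ne_of_mem_erase hj).symm]
  rw [Finset.prod_congr rfl hrest, Finsupp.tsub_apply, Finsupp.single_eq_same]
  ring

namespace IsPolyDeg

variable {d : ℕ} {g : EuclideanSpace ℝ (Fin m) → A}

theorem of_sum {ι : Type*} (T : Finset ι) (β : ι → Fin m →₀ ℕ) (a : ι → A)
    (hβ : ∀ i ∈ T, ((β i).sum fun _ n => n) ≤ d)
    (hg : ∀ x, g x = ∑ i ∈ T, (∏ j, x j ^ β i j) • a i) : IsPolyDeg d g := by
  classical
  refine ⟨T.image β, fun γ => ∑ i ∈ T with β i = γ, a i, ?_, fun x => ?_⟩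
  · simp only [Finset.forall_mem_image]
    exact hβ
  · rw [hg, ← Finset.sum_fiberwise_of_maps_to (fun i hi => Finset.mem_image_of_mem β hi)]
    refine Finset.sum_congr rfl fun γ _ => ?_
    rw [Finset.smul_sum]
    exact Finset.sum_congr rfl fun i hi => by rw [(Finset.mem_filter.mp hi).2]

theorem differentiable (hg : IsPolyDeg d g) : Differentiable ℝ g := by
  obtain ⟨S, c, -, hrep⟩ := hg
  rw [funext hrep]
  fun_prop

theorem fderiv_single_eq_sum {S : Finset (Fin m →₀ ℕ)} {c : (Fin m →₀ ℕ) → A}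
    (hrep : ∀ x, g x = ∑ α ∈ S, (∏ j, x j ^ α j) • c α) (x : EuclideanSpace ℝ (Fin m))
    (k : Fin m) :
    fderiv ℝ g x (EuclideanSpace.single k 1) =
      ∑ α ∈ S with α k ≠ 0,
        (∏ j, x j ^ (α - Finsupp.single k 1 : Fin m →₀ ℕ) j) • ((α k : ℝ) • c α) := by
  rw [funext hrep, fderiv_fun_sum fun α _ => (differentiable_prod_pow α x).smul_const (c α),
    _root_.sum_apply, Finset.sum_filter_of_ne]
  · refine Finset.sum_congr rfl fun α _ => ?_
    rw [fderiv_smul_const (differentiable_prod_pow α x), ContinuousLinearMap.smulRight_apply,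
      fderiv_prod_pow_single, mul_comm, mul_smul]
  · intro α _ hne hαk
    simp [hαk] at hne

theorem fderiv_single (hg : IsPolyDeg d g) (k : Fin m) :
    IsPolyDeg (d - 1) (fun x => fderiv ℝ g x (EuclideanSpace.single k 1)) := by
  obtain ⟨S, c, hdeg, hrep⟩ := hg
  refine of_sum _ (fun α => α - Finsupp.single k 1) (fun α => (α k : ℝ) • c α) (fun α hα => ?_)
    (fderiv_single_eq_sum hrep · k)
  obtain ⟨hαS, hαk⟩ := Finset.mem_filter.mp hα
  have hlower : (α - Finsupp.single k 1).degree + 1 = α.degree := by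
    conv_rhs => rw [← Finsupp.sub_add_single_one_cancel hαk]
    rw [map_add, Finsupp.degree_single]
  have hα : α.degree ≤ d := hdeg α hαS
  exact (by omega : (α - Finsupp.single k 1).degree ≤ d - 1)

theorem fderiv_single_eq_zero (hg : IsPolyDeg 0 g) (x : EuclideanSpace ℝ (Fin m)) (k : Fin m) :
    fderiv ℝ g x (EuclideanSpace.single k 1) = 0 := by
  obtain ⟨S, c, hdeg, hrep⟩ := hg
  rw [fderiv_single_eq_sum hrep, Finset.sum_eq_zero]
  intro α hα
  obtain ⟨hαS, hαk⟩ := Finset.mem_filter.mp hα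
  have hα : α = 0 := (Finsupp.degree_eq_zero_iff α).mp (Nat.le_zero.mp (hdeg α hαS))
  exact absurd (by simp [hα]) hαk

theorem const_mul (hg : IsPolyDeg d g) (a : A) : IsPolyDeg d (fun x => a * g x) := by
  obtain ⟨S, c, hdeg, hrep⟩ := hg
  exact ⟨S, fun α => a * c α, hdeg, fun x => by simp only [hrep, Finset.mul_sum, mul_smul_comm]⟩

theorem sum {ι : Type*} (s : Finset ι) {f : ι → EuclideanSpace ℝ (Fin m) → A}
    (hf : ∀ i, IsPolyDeg d (f i)) : IsPolyDeg d (fun x => ∑ i ∈ s, f i x) := by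
  choose S c hdeg hrep using hf
  exact of_sum (s.sigma S) (fun p => p.2) (fun p => c p.1 p.2)
    (fun p hp => hdeg _ _ (Finset.mem_sigma.mp hp).2) fun x => by simp only [hrep, Finset.sum_sigma]

theorem dirac (hg : IsPolyDeg d g) (e : Fin m → A) : IsPolyDeg (d - 1) (Dirac e g) :=
  sum _ fun k => (hg.fderiv_single k).const_mul (e k)

theorem dirac_eq_zero (hg : IsPolyDeg 0 g) (e : Fin m → A) : Dirac e g = 0 := by
  ext x
  simp only [Dirac, hg.fderiv_single_eq_zero, mul_zero, Finset.sum_const_zero, Pi.zero_apply]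

theorem iterate_dirac (hg : IsPolyDeg d g) (e : Fin m → A) (j : ℕ) :
    IsPolyDeg (d - j) ((Dirac e)^[j] g) := by
  induction j with
  | zero => exact hg
  | succ j ih =>
    rw [Function.iterate_succ_apply']
    exact ih.dirac e

end IsPolyDeg

theorem fderiv_smul_fst_snd_apply {E : Type*} [NormedAddCommGroup E] [NormedSpace ℝ E]
    {φ : ℝ → ℝ} {f : E → A} {p : ℝ × E} (hφ : DifferentiableAt ℝ φ p.1)
    (hf : DifferentiableAt ℝ f p.2) (v : ℝ × E) :
    fderiv ℝ (fun q : ℝ × E => φ q.1 • f q.2) p v =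
      φ p.1 • fderiv ℝ f p.2 v.2 + (deriv φ p.1 * v.1) • f p.2 := by
  have hφ' := hφ.hasDerivAt.comp_hasFDerivAt p (hasFDerivAt_fst (𝕜 := ℝ))
  have hf' := hf.hasFDerivAt.comp p hasFDerivAt_snd
  have hsmul : HasFDerivAt (fun q : ℝ × E => φ q.1 • f q.2) _ p := hφ'.smul hf'
  rw [hsmul.fderiv]
  simp

theorem CR_sum (e : Fin m → A) {ι : Type*} (s : Finset ι)
    {F : ι → ℝ × EuclideanSpace ℝ (Fin m) → A} {p : ℝ × EuclideanSpace ℝ (Fin m)}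
    (hF : ∀ i ∈ s, DifferentiableAt ℝ (F i) p) :
    CR e (fun q => ∑ i ∈ s, F i q) p = ∑ i ∈ s, CR e (F i) p := by
  simp only [CR, fderiv_fun_sum hF, _root_.sum_apply, Finset.mul_sum, Finset.sum_add_distrib]
  rw [Finset.sum_comm]

theorem CR_smul_fst_snd (e : Fin m → A) {φ : ℝ → ℝ} {f : EuclideanSpace ℝ (Fin m) → A}
    {p : ℝ × EuclideanSpace ℝ (Fin m)} (hφ : DifferentiableAt ℝ φ p.1)
    (hf : DifferentiableAt ℝ f p.2) :
    CR e (fun q => φ q.1 • f q.2) p = deriv φ p.1 • f p.2 + φ p.1 • Dirac e f p.2 := by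
  simp [CR, Dirac, fderiv_smul_fst_snd_apply hφ hf, Finset.smul_sum]

theorem deriv_neg_pow_succ_div_factorial (i : ℕ) (t : ℝ) :
    deriv (fun s : ℝ => (-s) ^ (i + 1) / (i + 1).factorial) t = -((-t) ^ i / i.factorial) := by
  have h := ((hasDerivAt_neg t).fun_pow (i + 1)).div_const ((i + 1).factorial : ℝ)
  rw [h.deriv, Nat.factorial_succ]
  push_cast
  field_simp

theorem CR_CKfin_eq_zero (e : Fin m → A) (d : ℕ) (g : EuclideanSpace ℝ (Fin m) → A)
    (hdiff : ∀ j, Differentiable ℝ ((Dirac e)^[j] g)) (hvanish : ∀ x, (Dirac e)^[d + 1] g x = 0)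
    (p : ℝ × EuclideanSpace ℝ (Fin m)) : CR e (CKfin e d g) p = 0 := by
  have hcoef : ∀ j : ℕ, Differentiable ℝ (fun t : ℝ => (-t) ^ j / j.factorial) := by fun_prop
  have hterm : ∀ j, CR e (fun q => ((-q.1) ^ j / j.factorial : ℝ) • (Dirac e)^[j] g q.2) p =
      deriv (fun t : ℝ => (-t) ^ j / j.factorial) p.1 • (Dirac e)^[j] g p.2 +
        ((-p.1) ^ j / j.factorial : ℝ) • (Dirac e)^[j + 1] g p.2 := by
    intro j
    rw [CR_smul_fst_snd e (hcoef j _) (hdiff j _), Function.iterate_succ_apply']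
  unfold CKfin
  rw [CR_sum e _ fun j _ => by fun_prop, Finset.sum_congr rfl fun j _ => hterm j,
    Finset.sum_add_distrib, Finset.sum_range_succ', Finset.sum_range_succ _ d, hvanish]
  simp only [deriv_neg_pow_succ_div_factorial, neg_smul, Finset.sum_neg_distrib, pow_zero,
    Nat.factorial_zero, Nat.cast_one, div_one, deriv_const', zero_smul, add_zero, smul_zero,
    neg_add_cancel]

theorem CKfin_zero_left (e : Fin m → A) (d : ℕ) (g : EuclideanSpace ℝ (Fin m) → A)
    (x : EuclideanSpace ℝ (Fin m)) : CKfin e d g (0, x) = g x := by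
  simp [CKfin, Finset.sum_range_succ']

theorem stmt10_general (e : Fin m → A)
    (d : ℕ) (g : EuclideanSpace ℝ (Fin m) → A) (hg : IsPolyDeg d g) :
    (∀ p, CR e (CKfin e d g) p = 0) ∧
    (∀ x : EuclideanSpace ℝ (Fin m), CKfin e d g (0, x) = g x) := by
  have hconst : IsPolyDeg 0 ((Dirac e)^[d] g) := by simpa using hg.iterate_dirac e d
  have hvanish : ∀ x, (Dirac e)^[d + 1] g x = 0 := by
    simp [Function.iterate_succ_apply', hconst.dirac_eq_zero e]
  exact ⟨CR_CKfin_eq_zero e d g (fun j => (hg.iterate_dirac e j).differentiable) hvanish,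
    CKfin_zero_left e d g⟩

/-- for a polynomial g of degree d, CK[g] is monogenic in ℝ^{m+1}
and restricts to g on x_0 = 0. -/
theorem stmt10 (e : Fin m → A)
    (he : ∀ j, e j * e j = -1)
    (hanti : ∀ j k, j ≠ k → e j * e k = -(e k * e j))
    (d : ℕ) (g : EuclideanSpace ℝ (Fin m) → A) (hg : IsPolyDeg d g) :
    (∀ p, CR e (CKfin e d g) p = 0) ∧
    (∀ x : EuclideanSpace ℝ (Fin m), CKfin e d g (0, x) = g x) :=
  stmt10_general e d g hg
end

section
/- The function M_2^k(x_0,\underline x) = (x_0² + 2x_0\underline x/(2k+m) + \underline x²/(2k+m)) P_k(\underline x) is monogenic in ℝ^{m+1}, and its hypercomplex derivative satisfies (1/2)\overline∂_x M_2^k = 2(x_0 + \underline x/(2k+m)) P_k(\underline x). -/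
/-!
Since `\underline x² = -|\underline x|²` is a scalar, `M_2^k = (x_0² - |x|²/c) P_k + (2x_0/c) \underline x P_k`
with `c = 2k + m`, whose `x_0`-derivative is `2x_0 P_k + (2/c) \underline x P_k`. On the other side,
the anticommutation relation `e_j \underline x + \underline x e_j = -2x_j`, Euler's identity
`Σ_j x_j ∂_{x_j} P_k = k P_k` and `∂_{\underline x} P_k = 0` give
`∂_{\underline x}(\underline x P_k) = -(m + 2k) P_k`, while `∂_{\underline x}(|x|² P_k) = 2 \underline x P_k`.
Hence `∂_{\underline x} M_2^k` is exactly minus the `x_0`-derivative, so `∂_x M_2^k = 0` and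
`\overline∂_x M_2^k` is twice the `x_0`-derivative.
-/

open Finset

variable {m : ℕ} {A : Type*} [NormedRing A] [NormedAlgebra ℝ A]

section PartialDerivatives

variable {E F G : Type*} [NormedAddCommGroup E] [NormedSpace ℝ E] [NormedAddCommGroup F]
  [NormedSpace ℝ F] [NormedAddCommGroup G] [NormedSpace ℝ G] {f : E × F → G} {p : E × F}

theorem DifferentiableAt.fderiv_apply_inl (hf : DifferentiableAt ℝ f p) (u : E) :
    fderiv ℝ f p (u, 0) = fderiv ℝ (fun x => f (x, p.2)) p.1 u := by
  obtain ⟨a, b⟩ := p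
  have h := hf.hasFDerivAt.comp a (hasFDerivAt_prodMk_left (𝕜 := ℝ) a b)
  exact (DFunLike.congr_fun h.fderiv u).symm

theorem DifferentiableAt.fderiv_apply_inr (hf : DifferentiableAt ℝ f p) (v : F) :
    fderiv ℝ f p (0, v) = fderiv ℝ (fun y => f (p.1, y)) p.2 v := by
  obtain ⟨a, b⟩ := p
  have h := hf.hasFDerivAt.comp b (hasFDerivAt_prodMk_right (𝕜 := ℝ) a b)
  exact (DFunLike.congr_fun h.fderiv v).symm

end PartialDerivatives

theorem fderiv_apply_self_of_homogeneous {E F : Type*} [NormedAddCommGroup E] [NormedSpace ℝ E]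
    [NormedAddCommGroup F] [NormedSpace ℝ F] {P : E → F} {k : ℕ} {x : E}
    (hP : DifferentiableAt ℝ P x) (hhom : ∀ t : ℝ, P (t • x) = t ^ k • P x) :
    fderiv ℝ P x x = (k : ℝ) • P x := by
  have hline : HasDerivAt (fun t : ℝ => t • x) x 1 := by
    simpa using (hasDerivAt_id (1 : ℝ)).smul_const x
  have hP' : HasFDerivAt P (fderiv ℝ P x) ((1 : ℝ) • x) := by
    rw [one_smul]
    exact hP.hasFDerivAt
  have hchain : HasDerivAt (fun t : ℝ => P (t • x)) (fderiv ℝ P x x) 1 :=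
    hP'.comp_hasDerivAt 1 hline
  have hpow : HasDerivAt (fun t : ℝ => P (t • x)) ((k : ℝ) • P x) 1 := by
    simp_rw [hhom]
    simpa using (hasDerivAt_pow k (1 : ℝ)).smul_const (P x)
  exact hchain.unique hpow

theorem ContinuousLinearMap.sum_smul_apply_single {F : Type*} [NormedAddCommGroup F]
    [NormedSpace ℝ F] (L : EuclideanSpace ℝ (Fin m) →L[ℝ] F) (x : EuclideanSpace ℝ (Fin m)) :
    ∑ j, x j • L (EuclideanSpace.single j 1) = L x := by
  conv_rhs => rw [← (EuclideanSpace.basisFun (Fin m) ℝ).sum_repr x]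
  simp [map_sum]

theorem IsPolyDeg.differentiable_s13 {d : ℕ} {g : EuclideanSpace ℝ (Fin m) → A}
    (h : IsPolyDeg d g) : Differentiable ℝ g := by
  obtain ⟨S, c, -, hg⟩ := h
  rw [funext hg]
  fun_prop

section CliffordVector

variable (e : Fin m → A)

theorem differentiable_vec : Differentiable ℝ (vec e) := by
  unfold vec
  fun_prop

theorem fderiv_vec_apply (x v : EuclideanSpace ℝ (Fin m)) : fderiv ℝ (vec e) x v = vec e v := by
  have : HasFDerivAt (vec e)
      (∑ j, (EuclideanSpace.proj j : EuclideanSpace ℝ (Fin m) →L[ℝ] ℝ).smulRight (e j)) x :=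
    HasFDerivAt.fun_sum fun j _ =>
      ((EuclideanSpace.proj j : EuclideanSpace ℝ (Fin m) →L[ℝ] ℝ).hasFDerivAt).smul_const (e j)
  simp [this.fderiv, vec]

theorem vec_single (j : Fin m) : vec e (EuclideanSpace.single j 1) = e j := by
  simp [vec]

variable {e}

theorem mul_vec_add_vec_mul (he : ∀ j, e j * e j = -1)
    (hanti : ∀ j k, j ≠ k → e j * e k = -(e k * e j)) (x : EuclideanSpace ℝ (Fin m)) (j : Fin m) :
    e j * vec e x + vec e x * e j = (-2 * x j) • (1 : A) := by
  rw [vec, mul_sum, sum_mul, ← sum_add_distrib, sum_eq_single j]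
  · rw [mul_smul_comm, smul_mul_assoc, he]
    module
  · intro i _ hij
    rw [mul_smul_comm, smul_mul_assoc, hanti j i (Ne.symm hij), smul_neg, neg_add_cancel]
  · exact fun h => absurd (mem_univ j) h

theorem vec_mul_self (he : ∀ j, e j * e j = -1)
    (hanti : ∀ j k, j ≠ k → e j * e k = -(e k * e j)) (x : EuclideanSpace ℝ (Fin m)) :
    vec e x * vec e x = -(‖x‖ ^ 2) • (1 : A) := by
  have hleft : vec e x * vec e x = ∑ j, x j • (e j * vec e x) := by
    conv_lhs => enter [1]; rw [vec]
    simp only [sum_mul, smul_mul_assoc]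
  have hright : vec e x * vec e x = ∑ j, x j • (vec e x * e j) := by
    conv_lhs => enter [2]; rw [vec]
    simp only [mul_sum, mul_smul_comm]
  have htwice : (2 : ℝ) • (vec e x * vec e x) = (2 : ℝ) • (-(‖x‖ ^ 2) • (1 : A)) := by
    rw [two_smul]
    nth_rewrite 1 [hleft]
    rw [hright, ← sum_add_distrib]
    simp only [← smul_add, mul_vec_add_vec_mul he hanti, smul_smul, ← sum_smul,
      EuclideanSpace.real_norm_sq_eq]
    congr 1
    rw [mul_neg, mul_sum, ← sum_neg_distrib]
    exact sum_congr rfl fun j _ => by ring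
  exact smul_right_injective A two_ne_zero htwice

end CliffordVector

section DiracCalculus

variable (e : Fin m → A) {x : EuclideanSpace ℝ (Fin m)}

theorem Dirac_add {f g : EuclideanSpace ℝ (Fin m) → A} (hf : DifferentiableAt ℝ f x)
    (hg : DifferentiableAt ℝ g x) :
    Dirac e (fun y => f y + g y) x = Dirac e f x + Dirac e g x := by
  simp only [Dirac, fderiv_fun_add hf hg, add_apply, mul_add, sum_add_distrib]

theorem Dirac_smul {a : EuclideanSpace ℝ (Fin m) → ℝ} {g : EuclideanSpace ℝ (Fin m) → A}
    (ha : DifferentiableAt ℝ a x) (hg : DifferentiableAt ℝ g x) :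
    Dirac e (fun y => a y • g y) x =
      ∑ j, fderiv ℝ a x (EuclideanSpace.single j 1) • (e j * g x) + a x • Dirac e g x := by
  simp only [Dirac, fderiv_fun_smul ha hg, add_apply,
    smul_apply, ContinuousLinearMap.smulRight_apply, mul_add, mul_smul_comm,
    sum_add_distrib, smul_sum]
  exact add_comm _ _

variable {e}

theorem Dirac_vec_mul (he : ∀ j, e j * e j = -1)
    (hanti : ∀ j k, j ≠ k → e j * e k = -(e k * e j)) {g : EuclideanSpace ℝ (Fin m) → A}
    (hg : DifferentiableAt ℝ g x) :
    Dirac e (fun y => vec e y * g y) x =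
      -(m : ℝ) • g x - (2 : ℝ) • fderiv ℝ g x x - vec e x * Dirac e g x := by
  have hterm : ∀ j, e j * (fderiv ℝ (fun y => vec e y * g y) x (EuclideanSpace.single j 1)) =
      (-2 : ℝ) • (x j • fderiv ℝ g x (EuclideanSpace.single j 1))
        - vec e x * (e j * fderiv ℝ g x (EuclideanSpace.single j 1)) - g x := by
    intro j
    rw [fderiv_fun_mul' ((differentiable_vec e).differentiableAt) hg]
    simp only [add_apply, smul_apply, smul_eq_mul,
      MulOpposite.smul_eq_mul_unop, MulOpposite.unop_op, fderiv_vec_apply, vec_single]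
    rw [mul_add, ← mul_assoc, ← mul_assoc, he, eq_sub_of_add_eq (mul_vec_add_vec_mul he hanti x j),
      sub_mul, smul_mul_assoc, one_mul, mul_assoc, neg_one_mul]
    module
  simp only [Dirac, hterm, sum_sub_distrib, ← smul_sum, ← mul_sum, sum_const, card_univ,
    Fintype.card_fin, ContinuousLinearMap.sum_smul_apply_single]
  module

end DiracCalculus

theorem CR_eq_deriv_add_Dirac (e : Fin m → A) {f : ℝ × EuclideanSpace ℝ (Fin m) → A}
    {p : ℝ × EuclideanSpace ℝ (Fin m)} (hf : DifferentiableAt ℝ f p) :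
    CR e f p = deriv (fun t => f (t, p.2)) p.1 + Dirac e (fun y => f (p.1, y)) p.2 := by
  simp only [CR, Dirac, hf.fderiv_apply_inl, hf.fderiv_apply_inr]
  rfl

theorem CRbar_eq_deriv_sub_Dirac (e : Fin m → A) {f : ℝ × EuclideanSpace ℝ (Fin m) → A}
    {p : ℝ × EuclideanSpace ℝ (Fin m)} (hf : DifferentiableAt ℝ f p) :
    CRbar e f p = deriv (fun t => f (t, p.2)) p.1 - Dirac e (fun y => f (p.1, y)) p.2 := by
  simp only [CRbar, Dirac, hf.fderiv_apply_inl, hf.fderiv_apply_inr]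
  rfl

/-- `M_2^k`, with `\underline x²` replaced by the scalar `-|\underline x|²`. -/
noncomputable def M2 (e : Fin m → A) (k : ℕ) (P : EuclideanSpace ℝ (Fin m) → A)
    (q : ℝ × EuclideanSpace ℝ (Fin m)) : A :=
  (q.1 ^ 2 - ‖q.2‖ ^ 2 / (2 * k + m)) • P q.2 + (2 * q.1 / (2 * k + m)) • (vec e q.2 * P q.2)

section M2

variable {e : Fin m → A} {k : ℕ} {P : EuclideanSpace ℝ (Fin m) → A}

theorem M2_eq (he : ∀ j, e j * e j = -1) (hanti : ∀ j k, j ≠ k → e j * e k = -(e k * e j))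
    (q : ℝ × EuclideanSpace ℝ (Fin m)) :
    M2 e k P q = ((q.1 ^ 2) • (1 : A) + (2 * q.1 / (2 * k + m : ℝ)) • vec e q.2 +
      ((2 * k + m : ℝ))⁻¹ • (vec e q.2 ^ 2)) * P q.2 := by
  rw [M2, sq (vec e q.2), vec_mul_self he hanti]
  simp only [add_mul, neg_smul, neg_mul, smul_mul_assoc, one_mul]
  module

theorem differentiable_M2 (hP : Differentiable ℝ P) : Differentiable ℝ (M2 e k P) := by
  have := differentiable_vec e
  have : Differentiable ℝ fun q : ℝ × EuclideanSpace ℝ (Fin m) => ‖q.2‖ ^ 2 :=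
    differentiable_snd.norm_sq ℝ
  unfold M2
  fun_prop

theorem hasDerivAt_M2_fst (x : EuclideanSpace ℝ (Fin m)) (t : ℝ) :
    HasDerivAt (fun s => M2 e k P (s, x))
      ((2 * t) • P x + (2 / (2 * k + m : ℝ)) • (vec e x * P x)) t := by
  simp only [M2]
  refine ((((hasDerivAt_pow 2 t).sub_const _).smul_const (P x)).add
    ((((hasDerivAt_id t).const_mul 2).div_const _).smul_const _)).congr_deriv ?_
  norm_num

theorem Dirac_M2_snd (he : ∀ j, e j * e j = -1) (hanti : ∀ j k, j ≠ k → e j * e k = -(e k * e j))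
    (hc : (2 * k + m : ℝ) ≠ 0) {x : EuclideanSpace ℝ (Fin m)} (hP : DifferentiableAt ℝ P x)
    (hhom : ∀ t : ℝ, P (t • x) = t ^ k • P x) (hmono : Dirac e P x = 0) (t : ℝ) :
    Dirac e (fun y => M2 e k P (t, y)) x =
      -(2 * t) • P x - (2 / (2 * k + m : ℝ)) • (vec e x * P x) := by
  simp only [M2]
  set c : ℝ := 2 * k + m
  have ha : HasFDerivAt (fun y : EuclideanSpace ℝ (Fin m) => t ^ 2 - ‖y‖ ^ 2 / c)
      (-(c⁻¹ • 2 • innerSL ℝ x)) x := by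
    simp_rw [div_eq_mul_inv]
    convert ((hasStrictFDerivAt_norm_sq x).hasFDerivAt.mul_const c⁻¹).const_sub (t ^ 2) using 2
  have hgrad : ∀ j, fderiv ℝ (fun y : EuclideanSpace ℝ (Fin m) => t ^ 2 - ‖y‖ ^ 2 / c) x
      (EuclideanSpace.single j 1) = -(2 / c) * x j := by
    intro j
    simp [ha.fderiv, EuclideanSpace.inner_single_right]
    ring
  have hv : DifferentiableAt ℝ (fun y => vec e y * P y) x := (differentiable_vec e x).mul hP
  have hvec : ∑ j, x j • (e j * P x) = vec e x * P x := by
    simp only [vec, sum_mul, smul_mul_assoc]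
  rw [Dirac_add e (ha.differentiableAt.fun_smul hP) ((differentiableAt_const _).fun_smul hv),
    Dirac_smul e ha.differentiableAt hP, Dirac_smul e (differentiableAt_const _) hv,
    Dirac_vec_mul he hanti hP, hmono, fderiv_apply_self_of_homogeneous hP hhom]
  simp only [hgrad, mul_smul, ← smul_sum, hvec, fderiv_fun_const, Pi.zero_apply,
    zero_apply, zero_smul, sum_const_zero, smul_zero, mul_zero, sub_zero,
    zero_add, add_zero]
  match_scalars
  · field_simp
  · field_simp
    ring

theorem CR_M2 (he : ∀ j, e j * e j = -1) (hanti : ∀ j k, j ≠ k → e j * e k = -(e k * e j))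
    (hc : (2 * k + m : ℝ) ≠ 0) (hP : Differentiable ℝ P)
    (hhom : ∀ (t : ℝ) (x : EuclideanSpace ℝ (Fin m)), P (t • x) = t ^ k • P x)
    (hmono : ∀ x, Dirac e P x = 0) (p : ℝ × EuclideanSpace ℝ (Fin m)) :
    CR e (M2 e k P) p = 0 := by
  rw [CR_eq_deriv_add_Dirac e (differentiable_M2 hP p), (hasDerivAt_M2_fst p.2 p.1).deriv,
    Dirac_M2_snd he hanti hc (hP p.2) (hhom · p.2) (hmono p.2)]
  module

theorem CRbar_M2 (he : ∀ j, e j * e j = -1) (hanti : ∀ j k, j ≠ k → e j * e k = -(e k * e j))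
    (hc : (2 * k + m : ℝ) ≠ 0) (hP : Differentiable ℝ P)
    (hhom : ∀ (t : ℝ) (x : EuclideanSpace ℝ (Fin m)), P (t • x) = t ^ k • P x)
    (hmono : ∀ x, Dirac e P x = 0) (p : ℝ × EuclideanSpace ℝ (Fin m)) :
    CRbar e (M2 e k P) p = (4 * p.1) • P p.2 + (4 / (2 * k + m : ℝ)) • (vec e p.2 * P p.2) := by
  rw [CRbar_eq_deriv_sub_Dirac e (differentiable_M2 hP p), (hasDerivAt_M2_fst p.2 p.1).deriv,
    Dirac_M2_snd he hanti hc (hP p.2) (hhom · p.2) (hmono p.2)]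
  module

end M2

/-- M_2^k(x) = (x_0² + 2x_0\underline x/(2k+m) + \underline x²/(2k+m)) P_k
is monogenic in ℝ^{m+1} and (1/2)\overline∂_x M_2^k = 2(x_0 + \underline x/(2k+m)) P_k. -/
theorem stmt13 (e : Fin m → A)
    (he : ∀ j, e j * e j = -1)
    (hanti : ∀ j k, j ≠ k → e j * e k = -(e k * e j))
    (k : ℕ) (hkm : 1 ≤ 2 * k + m)
    (P : EuclideanSpace ℝ (Fin m) → A)
    (hPpoly : IsPolyDeg k P)
    (hhom : ∀ (t : ℝ) (x : EuclideanSpace ℝ (Fin m)), P (t • x) = t ^ k • P x)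
    (hmono : ∀ x, Dirac e P x = 0) :
    (∀ p, CR e
        (fun q => ((q.1 ^ 2) • (1 : A) + (2 * q.1 / (2 * k + m : ℝ)) • vec e q.2 +
          ((2 * k + m : ℝ))⁻¹ • (vec e q.2 ^ 2)) * P q.2) p = 0) ∧
    (∀ p, (1 / 2 : ℝ) • CRbar e
        (fun q => ((q.1 ^ 2) • (1 : A) + (2 * q.1 / (2 * k + m : ℝ)) • vec e q.2 +
          ((2 * k + m : ℝ))⁻¹ • (vec e q.2 ^ 2)) * P q.2) p =
      (2 : ℝ) • ((p.1 • (1 : A) + ((2 * k + m : ℝ))⁻¹ • vec e p.2) * P p.2)) := by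
  have hc : (2 * k + m : ℝ) ≠ 0 := by exact_mod_cast (by omega : 2 * k + m ≠ 0)
  have hP := hPpoly.differentiable_s13
  simp only [← M2_eq he hanti]
  refine ⟨CR_M2 he hanti hc hP hhom hmono, fun p => ?_⟩
  rw [CRbar_M2 he hanti hc hP hhom hmono, add_mul, smul_mul_assoc, smul_mul_assoc, one_mul]
  module
end
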